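/- arXiv:2412.09254 — 5 statements merged into one kernel-verified Lean document; each statement's English description precedes it below -/
import Mathlib

section
/- Let Y, Ŷ, A, D be random variables with Y, Ŷ taking values in {1,...,K}, A, D in {0,1}, and suppose P(Ŷ = Y | D = 1) = 1. Let p_D = P(D=1), p⁺ = P(A=1) ∈ (0,1), q⁺ = P(A=1 | D=1), q_ŷ = P(Y=ŷ | D=1), q_ŷ⁺ = P(Y=ŷ, A=1 | D=1), φ_ŷ⁺ = P(Ŷ=ŷ | D=0, A=1), φ_ŷ⁻ = P(Ŷ=ŷ | D=0, A=0). Then for every ŷ, the statistical parity gap Δs.p.(ŷ) := P(Ŷ=ŷ | A=1) − P(Ŷ=ŷ | A=0) equals (p_D / (p⁺(1−p⁺)))·(φ_ŷ⁺(p⁺ − q⁺) − (q_ŷ p⁺ − q_ŷ⁺)) + (φ_ŷ⁺ − φ_ŷ⁻)·(1 − p_D(1−q⁺)/(1−p⁺)), assuming all conditioning events have positive probability. -/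
open scoped BigOperators Classical

noncomputable def pr {Ω : Type*} [Fintype Ω] (P : Ω → ℝ) (E : Set Ω) : ℝ :=
  ∑ ω, if ω ∈ E then P ω else 0

noncomputable def cpr {Ω : Type*} [Fintype Ω] (P : Ω → ℝ) (E F : Set Ω) : ℝ :=
  pr P (E ∩ F) / pr P F

/-!
Split `P(Ŷ = ŷ, A = a)` according to `D`. On `D = 1` the prediction equals the label almost
surely, so that part is `P(Y = ŷ, A = a, D = 1)`, i.e. `q_ŷ⁺ p_D` or `(q_ŷ - q_ŷ⁺) p_D`. On
`D = 0` it is `φ_ŷ^a P(D = 0, A = a)`, where `P(D = 0, A = 1) = p⁺ - q⁺ p_D` and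
`P(D = 0, A = 0) = 1 - p⁺ - (1 - q⁺) p_D`. Dividing by `p⁺` and `1 - p⁺`, the gap is a rational
identity in these quantities.
-/

section Pr

variable {Ω : Type*} [Fintype Ω] {P : Ω → ℝ}

lemma pr_univ (hP1 : ∑ ω, P ω = 1) : pr P Set.univ = 1 := by
  simpa [pr] using hP1

lemma pr_nonneg (hP0 : ∀ ω, 0 ≤ P ω) (E : Set Ω) : 0 ≤ pr P E :=
  Finset.sum_nonneg fun ω _ => by split_ifs <;> simp [hP0 ω]

lemma pr_mono (hP0 : ∀ ω, 0 ≤ P ω) {E F : Set Ω} (h : E ⊆ F) : pr P E ≤ pr P F :=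
  Finset.sum_le_sum fun ω _ => by
    by_cases hE : ω ∈ E
    · simp [hE, h hE]
    · split_ifs <;> simp [hP0 ω]

lemma pr_congr_of_ae {E F : Set Ω} (h : ∀ ω, P ω ≠ 0 → (ω ∈ E ↔ ω ∈ F)) :
    pr P E = pr P F :=
  Finset.sum_congr rfl fun ω _ => by
    by_cases hω : P ω = 0
    · simp [hω]
    · simp only [h ω hω]

lemma pr_inter_add_pr_diff (P : Ω → ℝ) (E F : Set Ω) :
    pr P (E ∩ F) + pr P (E \ F) = pr P E := by
  simp only [pr, ← Finset.sum_add_distrib]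
  refine Finset.sum_congr rfl fun ω _ => ?_
  by_cases hF : ω ∈ F <;> simp [hF]

lemma pr_inter_false (P : Ω → ℝ) (E : Set Ω) (D : Ω → Bool) :
    pr P (E ∩ {ω | D ω = false}) = pr P E - pr P (E ∩ {ω | D ω = true}) := by
  have hfalse : E ∩ {ω | D ω = false} = E \ {ω | D ω = true} := by ext; simp
  rw [hfalse, ← pr_inter_add_pr_diff P E, add_sub_cancel_left]

lemma pr_false (hP1 : ∑ ω, P ω = 1) (A : Ω → Bool) :
    pr P {ω | A ω = false} = 1 - pr P {ω | A ω = true} := by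
  simpa only [Set.univ_inter, pr_univ hP1] using pr_inter_false P Set.univ A

/-- Also when `pr P F = 0`, where `cpr P E F = 0` is a junk value. -/
lemma pr_inter_eq_cpr_mul (hP0 : ∀ ω, 0 ≤ P ω) (E F : Set Ω) :
    pr P (E ∩ F) = cpr P E F * pr P F := by
  by_cases hF : pr P F = 0
  · have := pr_mono hP0 (Set.inter_subset_right (s := E) (t := F))
    rw [hF, mul_zero]
    linarith [pr_nonneg hP0 (E ∩ F)]
  · exact (div_mul_cancel₀ _ hF).symm

lemma eq_zero_of_mem_of_pr_eq_zero (hP0 : ∀ ω, 0 ≤ P ω) {E : Set Ω} (h : pr P E = 0) :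
    ∀ ω ∈ E, P ω = 0 := by
  intro ω hω
  have hnn : ∀ i ∈ Finset.univ, (0 : ℝ) ≤ if i ∈ E then P i else 0 := fun i _ => by
    split_ifs <;> simp [hP0 i]
  simpa [hω] using (Finset.sum_eq_zero_iff_of_nonneg hnn).mp h ω (Finset.mem_univ ω)

lemma mem_of_cpr_eq_one (hP0 : ∀ ω, 0 ≤ P ω) {E F : Set Ω} (h : cpr P E F = 1) :
    ∀ ω ∈ F, P ω ≠ 0 → ω ∈ E := by
  have hEF : pr P (E ∩ F) = pr P F := by rw [pr_inter_eq_cpr_mul hP0, h, one_mul]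
  have hdiff : pr P (F \ E) = 0 := by
    linarith [pr_inter_add_pr_diff P F E, Set.inter_comm E F ▸ hEF]
  intro ω hωF hω
  by_contra hωE
  exact hω (eq_zero_of_mem_of_pr_eq_zero hP0 hdiff ω ⟨hωF, hωE⟩)

end Pr

lemma pr_pred_inter_eq_of_memorized {Ω β : Type*} [Fintype Ω] {P : Ω → ℝ} (hP0 : ∀ ω, 0 ≤ P ω)
    {Y Yh : Ω → β} {D : Ω → Bool} (hmem : cpr P {ω | Yh ω = Y ω} {ω | D ω = true} = 1)
    (y : β) (B : Set Ω) :
    pr P ({ω | Yh ω = y} ∩ B) = pr P ({ω | Y ω = y} ∩ B ∩ {ω | D ω = true})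
      + pr P ({ω | Yh ω = y} ∩ ({ω | D ω = false} ∩ B)) := by
  have hmemorized : pr P ({ω | Yh ω = y} ∩ B ∩ {ω | D ω = true})
      = pr P ({ω | Y ω = y} ∩ B ∩ {ω | D ω = true}) := by
    refine pr_congr_of_ae fun ω hω => ?_
    by_cases hD : D ω = true
    · have hY : Yh ω = Y ω := mem_of_cpr_eq_one hP0 hmem ω hD hω
      simp [hD, hY]
    · simp [hD]
  rw [← Set.inter_assoc, Set.inter_right_comm {ω | Yh ω = y}, pr_inter_false, hmemorized]
  ring

theorem stmt_0_general {Ω : Type*} [Fintype Ω] (P : Ω → ℝ)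
    (hP0 : ∀ ω, 0 ≤ P ω) (hP1 : ∑ ω, P ω = 1)
    {K : ℕ} (Y Yh : Ω → Fin K) (A D : Ω → Bool)
    (hmem : cpr P {ω | Yh ω = Y ω} {ω | D ω = true} = 1)
    (yh : Fin K)
    (pD pp qp qy qyp phip phim : ℝ)
    (hpD : pD = pr P {ω | D ω = true})
    (hpp : pp = pr P {ω | A ω = true})
    (hpp0 : 0 < pp) (hpp1 : pp < 1)
    (hqp : qp = cpr P {ω | A ω = true} {ω | D ω = true})
    (hqy : qy = cpr P {ω | Y ω = yh} {ω | D ω = true})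
    (hqyp : qyp = cpr P ({ω | Y ω = yh} ∩ {ω | A ω = true}) {ω | D ω = true})
    (hphip : phip = cpr P {ω | Yh ω = yh} ({ω | D ω = false} ∩ {ω | A ω = true}))
    (hphim : phim = cpr P {ω | Yh ω = yh} ({ω | D ω = false} ∩ {ω | A ω = false})) :
    cpr P {ω | Yh ω = yh} {ω | A ω = true} - cpr P {ω | Yh ω = yh} {ω | A ω = false}
      = pD / (pp * (1 - pp)) * (phip * (pp - qp) - (qy * pp - qyp))
        + (phip - phim) * (1 - pD * (1 - qp) / (1 - pp)) := by
  have hD1 : ∀ E, pr P (E ∩ {ω | D ω = true}) = cpr P E {ω | D ω = true} * pD :=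
    fun E => hpD ▸ pr_inter_eq_cpr_mul hP0 E _
  have hA0 : pr P {ω | A ω = false} = 1 - pp := hpp ▸ pr_false hP1 A
  have hD0A1 : pr P ({ω | D ω = false} ∩ {ω | A ω = true}) = pp - qp * pD := by
    rw [Set.inter_comm, pr_inter_false, hD1, ← hqp, ← hpp]
  have hD0A0 : pr P ({ω | D ω = false} ∩ {ω | A ω = false}) = 1 - pp - (1 - qp) * pD := by
    rw [Set.inter_comm, pr_inter_false, hA0, Set.inter_comm, pr_inter_false, Set.inter_comm,
      hD1, ← hqp, ← hpD]
    ring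
  have hYA0 : pr P ({ω | Y ω = yh} ∩ {ω | A ω = false} ∩ {ω | D ω = true}) = (qy - qyp) * pD := by
    rw [Set.inter_right_comm, pr_inter_false, Set.inter_right_comm, hD1, hD1, ← hqy, ← hqyp]
    ring
  have hYhA1 := pr_pred_inter_eq_of_memorized hP0 hmem yh {ω | A ω = true}
  have hYhA0 := pr_pred_inter_eq_of_memorized hP0 hmem yh {ω | A ω = false}
  rw [hD1, ← hqyp, pr_inter_eq_cpr_mul hP0 _ (_ ∩ _), ← hphip, hD0A1] at hYhA1
  rw [hYA0, pr_inter_eq_cpr_mul hP0 _ (_ ∩ _), ← hphim, hD0A0] at hYhA0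
  rw [cpr, cpr, hYhA1, hYhA0, ← hpp, hA0]
  have hpp1' : 1 - pp ≠ 0 := by linarith
  field_simp
  ring

/-- statistical parity gap of the memorizing classifier. -/
theorem stmt_0 {Ω : Type*} [Fintype Ω] (P : Ω → ℝ)
    (hP0 : ∀ ω, 0 ≤ P ω) (hP1 : ∑ ω, P ω = 1)
    {K : ℕ} (Y Yh : Ω → Fin K) (A D : Ω → Bool)
    (hA1 : 0 < pr P {ω | A ω = true}) (hA0 : 0 < pr P {ω | A ω = false})
    (hD1 : 0 < pr P {ω | D ω = true})
    (hD0A1 : 0 < pr P ({ω | D ω = false} ∩ {ω | A ω = true}))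
    (hD0A0 : 0 < pr P ({ω | D ω = false} ∩ {ω | A ω = false}))
    (hmem : cpr P {ω | Yh ω = Y ω} {ω | D ω = true} = 1)
    (yh : Fin K)
    (pD pp qp qy qyp phip phim : ℝ)
    (hpD : pD = pr P {ω | D ω = true})
    (hpp : pp = pr P {ω | A ω = true})
    (hpp0 : 0 < pp) (hpp1 : pp < 1)
    (hqp : qp = cpr P {ω | A ω = true} {ω | D ω = true})
    (hqy : qy = cpr P {ω | Y ω = yh} {ω | D ω = true})
    (hqyp : qyp = cpr P ({ω | Y ω = yh} ∩ {ω | A ω = true}) {ω | D ω = true})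
    (hphip : phip = cpr P {ω | Yh ω = yh} ({ω | D ω = false} ∩ {ω | A ω = true}))
    (hphim : phim = cpr P {ω | Yh ω = yh} ({ω | D ω = false} ∩ {ω | A ω = false})) :
    cpr P {ω | Yh ω = yh} {ω | A ω = true} - cpr P {ω | Yh ω = yh} {ω | A ω = false}
      = pD / (pp * (1 - pp)) * (phip * (pp - qp) - (qy * pp - qyp))
        + (phip - phim) * (1 - pD * (1 - qp) / (1 - pp)) :=
  stmt_0_general P hP0 hP1 Y Yh A D hmem yh pD pp qp qy qyp phip phim hpD hpp hpp0 hpp1 hqp hqy hqyp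
    hphip hphim
end

section
/- Let K ≥ 1, p ∈ (0,1), p_D ∈ (0,1), and φ⁺, φ⁻ ∈ ℝ^K with nonneg entries summing to 1 each and c₁ ≠ 0 where c = (1−p)φ⁺ + pφ⁻. Define b = p(1−p)·((1−p_D)/p_D)·(φ⁺ − φ⁻) and f(u,v) = (p_D/(p(1−p)))·(v − p·u) + φ⁺·(1 − p_D·(1ᵀv)/p) − φ⁻·(1 − p_D·(1 − 1ᵀv)/(1−p)) for u, v ∈ ℝ^K with 1ᵀu = 1. Then f(u,v) = 0 if and only if v = p·u − b + λ·c for some λ ∈ ℝ; moreover in that case necessarily λ = 1ᵀv − p. -/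
open scoped BigOperators

/-!
Up to the nonzero factor `pD / (p (1 - p))`, `f u v` is `v - (p • u - b + (1ᵀv - p) • c)`:
the coefficients of `φ⁺` and `φ⁻` in `f` are affine in `s = 1ᵀv` and match those of
`b` and `c`. So `f u v = 0` exactly when `v` is such an affine point, and since
`1ᵀu = 1ᵀc = 1` and `1ᵀb = 0`, summing `v = p • u - b + t • c` forces `t = 1ᵀv - p`.
-/

theorem residual_eq_smul_sub_affine {𝕜 E : Type*} [Field 𝕜] [AddCommGroup E] [Module 𝕜 E]
    {p pD : 𝕜} (hp : p ≠ 0) (hp1 : 1 - p ≠ 0) (hpD : pD ≠ 0) (s : 𝕜) (u v φp φm : E) :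
    (pD / (p * (1 - p))) • (v - p • u) + (1 - pD * s / p) • φp
        - (1 - pD * (1 - s) / (1 - p)) • φm =
      (pD / (p * (1 - p))) • (v - (p • u - (p * (1 - p) * ((1 - pD) / pD)) • (φp - φm)
        + (s - p) • ((1 - p) • φp + p • φm))) := by
  match_scalars <;> field_simp <;> ring

theorem eq_sum_sub_of_eq_smul_sub_add_smul {ι R : Type*} [Fintype ι] [CommRing R]
    {p t : R} {u b c v : ι → R} (hu : ∑ i, u i = 1) (hb : ∑ i, b i = 0) (hc : ∑ i, c i = 1)
    (hv : v = p • u - b + t • c) : t = ∑ i, v i - p := by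
  subst hv
  simp only [Pi.add_apply, Pi.sub_apply, Pi.smul_apply, smul_eq_mul, Finset.sum_add_distrib,
    Finset.sum_sub_distrib, ← Finset.mul_sum, hu, hb, hc]
  ring

theorem stmt_9_general {K : ℕ} (p pD : ℝ)
    (hp : p ∈ Set.Ioo (0:ℝ) 1) (hpD : pD ∈ Set.Ioo (0:ℝ) 1)
    (phip phim : Fin K → ℝ)
    (h1 : ∑ i, phip i = 1) (h2 : ∑ i, phim i = 1)
    (c b : Fin K → ℝ)
    (hc : c = (1 - p) • phip + p • phim)
    (hb : b = (p * (1 - p) * ((1 - pD) / pD)) • (phip - phim))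
    (f : (Fin K → ℝ) → (Fin K → ℝ) → (Fin K → ℝ))
    (hf : ∀ u v, f u v = (pD / (p * (1 - p))) • (v - p • u)
        + (1 - pD * (∑ i, v i) / p) • phip
        - (1 - pD * (1 - ∑ i, v i) / (1 - p)) • phim)
    (u v : Fin K → ℝ) (hu : ∑ i, u i = 1) :
    (f u v = 0 ↔ ∃ t : ℝ, v = p • u - b + t • c) ∧
    (f u v = 0 → ∀ t : ℝ, v = p • u - b + t • c → t = (∑ i, v i) - p) := by
  obtain ⟨hp0, hp1⟩ := hp
  obtain ⟨hpD0, -⟩ := hpD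
  have hfactor : pD / (p * (1 - p)) ≠ 0 := by positivity [sub_pos.2 hp1]
  have key : f u v = (pD / (p * (1 - p))) • (v - (p • u - b + (∑ i, v i - p) • c)) := by
    rw [hf, hb, hc]
    exact residual_eq_smul_sub_affine hp0.ne' (sub_pos.2 hp1).ne' hpD0.ne' _ u v phip phim
  have hsum_b : ∑ i, b i = 0 := by
    simp [hb, ← Finset.mul_sum, Finset.sum_sub_distrib, h1, h2]
  have hsum_c : ∑ i, c i = 1 := by
    simp [hc, Finset.sum_add_distrib, ← Finset.mul_sum, h1, h2]
  have hcoeff : ∀ t : ℝ, v = p • u - b + t • c → t = ∑ i, v i - p :=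
    fun t => eq_sum_sub_of_eq_smul_sub_add_smul hu hsum_b hsum_c
  refine ⟨⟨fun h => ⟨∑ i, v i - p, ?_⟩, ?_⟩, fun _ => hcoeff⟩
  · rwa [key, smul_eq_zero_iff_right hfactor, sub_eq_zero] at h
  · rintro ⟨t, hv⟩
    rw [key, ← hcoeff t hv, ← hv, sub_self, smul_zero]

/-- solutions of `f(u,v) = 0` are exactly `v = p·u - b + λ·c`, and then
`λ = 1ᵀv - p`. -/
theorem stmt_9 {K : ℕ} (hK : 0 < K) (p pD : ℝ)
    (hp : p ∈ Set.Ioo (0:ℝ) 1) (hpD : pD ∈ Set.Ioo (0:ℝ) 1)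
    (phip phim : Fin K → ℝ)
    (hphip0 : ∀ i, 0 ≤ phip i) (hphim0 : ∀ i, 0 ≤ phim i)
    (h1 : ∑ i, phip i = 1) (h2 : ∑ i, phim i = 1)
    (c b : Fin K → ℝ)
    (hc : c = (1 - p) • phip + p • phim)
    (hc1 : c ⟨0, hK⟩ ≠ 0)
    (hb : b = (p * (1 - p) * ((1 - pD) / pD)) • (phip - phim))
    (f : (Fin K → ℝ) → (Fin K → ℝ) → (Fin K → ℝ))
    (hf : ∀ u v, f u v = (pD / (p * (1 - p))) • (v - p • u)
        + (1 - pD * (∑ i, v i) / p) • phip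
        - (1 - pD * (1 - ∑ i, v i) / (1 - p)) • phim)
    (u v : Fin K → ℝ) (hu : ∑ i, u i = 1) :
    (f u v = 0 ↔ ∃ t : ℝ, v = p • u - b + t • c) ∧
    (f u v = 0 → ∀ t : ℝ, v = p • u - b + t • c → t = (∑ i, v i) - p) :=
  stmt_9_general p pD hp hpD phip phim h1 h2 c b hc hb f hf u v hu
end

section
/- (Sufficient condition for Δs.p. = 0 solvability.) Let K ≥ 1, p⁺ ∈ (0,1), p_D ∈ (0,1), and φ⁺, φ⁻ ∈ ℝ^K with strictly positive entries, each summing to 1. Define c = (1−p⁺)φ⁺ + p⁺φ⁻ and b = p⁺(1−p⁺)((1−p_D)/p_D)(φ⁺−φ⁻). If p_D ≥ (1−p⁺)·max_y (φ⁻_y − φ⁺_y)/φ⁻_y, then c_i + b_i/p⁺ ≥ 0 for every i, and consequently the inclusion {x ∈ ℝ^{K+1} : −(1−p⁺)x_i + c_i + x_{K+1} ≤ 0 and p⁺x_i + x_{K+1} ≤ 0 ∀i} ⊆ {x : Σ_i (p⁺c_i + b_i)x_i + x_{K+1} ≤ 0} holds. -/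
open scoped BigOperators

/-- sufficient condition for solvability of `Δs.p. = 0`. -/
theorem stmt_12 {K : ℕ} [NeZero K] (pp pD : ℝ)
    (hpp : pp ∈ Set.Ioo (0:ℝ) 1) (hpD : pD ∈ Set.Ioo (0:ℝ) 1)
    (phip phim : Fin K → ℝ)
    (hphip0 : ∀ i, 0 < phip i) (hphim0 : ∀ i, 0 < phim i)
    (h1 : ∑ i, phip i = 1) (h2 : ∑ i, phim i = 1)
    (c b : Fin K → ℝ)
    (hc : c = fun i => (1 - pp) * phip i + pp * phim i)
    (hb : b = fun i => pp * (1 - pp) * ((1 - pD) / pD) * (phip i - phim i))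
    (hbound : pD ≥ (1 - pp)
        * Finset.univ.sup' Finset.univ_nonempty (fun y => (phim y - phip y) / phim y)) :
    (∀ i, 0 ≤ c i + b i / pp) ∧
    {x : Fin (K + 1) → ℝ | ∀ i : Fin K,
        -(1 - pp) * x (Fin.castSucc i) + c i + x (Fin.last K) ≤ 0 ∧
        pp * x (Fin.castSucc i) + x (Fin.last K) ≤ 0}
      ⊆ {x : Fin (K + 1) → ℝ |
          (∑ i : Fin K, (pp * c i + b i) * x (Fin.castSucc i)) + x (Fin.last K) ≤ 0} := by
  obtain ⟨hpp0, hpp1⟩ := hpp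
  obtain ⟨hpD0, hpD1⟩ := hpD
  have hkey : ∀ i, 0 ≤ c i + b i / pp := by
    intro i
    have hsup : (phim i - phip i) / phim i ≤
        Finset.univ.sup' Finset.univ_nonempty (fun y => (phim y - phip y) / phim y) :=
      Finset.le_sup' (fun y => (phim y - phip y) / phim y) (Finset.mem_univ i)
    have h3 : (1 - pp) * ((phim i - phip i) / phim i) ≤ pD :=
      le_trans (mul_le_mul_of_nonneg_left hsup (by linarith)) hbound
    have h4 : (1 - pp) * (phim i - phip i) ≤ pD * phim i := by
      have := mul_le_mul_of_nonneg_right h3 (hphim0 i).le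
      calc (1 - pp) * (phim i - phip i)
          = (1 - pp) * ((phim i - phip i) / phim i) * phim i := by
            rw [mul_assoc, div_mul_cancel₀ _ (hphim0 i).ne']
        _ ≤ pD * phim i := this
    have hcb : c i + b i / pp = (pD * phim i - (1 - pp) * (phim i - phip i)) / pD := by
      simp only [hc, hb]
      field_simp
      ring
    rw [hcb]
    exact div_nonneg (by linarith) hpD0.le
  refine ⟨hkey, ?_⟩
  intro x hx
  simp only [Set.mem_setOf_eq] at hx ⊢
  have hxi : ∀ i : Fin K, (pp * c i + b i) * x (Fin.castSucc i)
      ≤ (pp * c i + b i) * (-x (Fin.last K) / pp) := by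
    intro i
    have hcoef : 0 ≤ pp * c i + b i := by
      have := hkey i
      have : 0 ≤ pp * (c i + b i / pp) := mul_nonneg hpp0.le this
      calc (0:ℝ) ≤ pp * (c i + b i / pp) := this
        _ = pp * c i + b i := by field_simp
    apply mul_le_mul_of_nonneg_left _ hcoef
    have := (hx i).2
    rw [le_div_iff₀ hpp0]
    linarith
  have hsumc : ∑ i, c i = 1 := by
    simp only [hc]
    rw [Finset.sum_add_distrib, ← Finset.mul_sum, ← Finset.mul_sum, h1, h2]
    ring
  have hsumb : ∑ i, b i = 0 := by
    simp only [hb]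
    rw [← Finset.mul_sum, Finset.sum_sub_distrib, h1, h2]
    ring
  calc (∑ i : Fin K, (pp * c i + b i) * x (Fin.castSucc i)) + x (Fin.last K)
      ≤ (∑ i : Fin K, (pp * c i + b i) * (-x (Fin.last K) / pp)) + x (Fin.last K) := by
        exact add_le_add_left (Finset.sum_le_sum (fun i _ => hxi i)) _
    _ = (∑ i : Fin K, (pp * c i + b i)) * (-x (Fin.last K) / pp) + x (Fin.last K) := by
        rw [Finset.sum_mul]
    _ = (pp * 1 + 0) * (-x (Fin.last K) / pp) + x (Fin.last K) := by
        rw [Finset.sum_add_distrib, ← Finset.mul_sum, hsumc, hsumb]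
    _ = 0 := by field_simp; ring
end

section
/- (Characterization of Δeq.opp. = 0.) Fix K ≥ 1 and for each y ∈ [K] real numbers p_y⁺, p_y⁻ > 0 with Σ_y(p_y⁺+p_y⁻) = 1, C_y⁺, C_y⁻ ∈ [0,1), and p_D ∈ (0,1). Set α_y = p_y⁺/(1−C_y⁺) + p_y⁻/(1−C_y⁻). Consider the system in variables (q_y, q_y⁺): for each y, define w_y⁺ = q_y⁺/p_y⁺ and w_y⁻ = (q_y − q_y⁺)/p_y⁻. Then (q_y, q_y⁺) satisfies Σ_y q_y = 1, 0 ≤ q_y⁺ ≤ q_y, and C_y⁺(1 − p_D w_y⁺) − C_y⁻(1 − p_D w_y⁻) + p_D(w_y⁺ − w_y⁻) = 0 for all y, if and only if there exist λ_y ∈ ℝ with q_y = p_y/p_D − α_yλ_y (where p_y = p_y⁺ + p_y⁻), q_y⁺ = p_y⁺/p_D − (p_y⁺/(1−C_y⁺))λ_y, Σ_y α_yλ_y = (1−p_D)/p_D, λ_y ≤ (1−C_y⁺)/p_D, and λ_y ≤ (1−C_y⁻)/p_D. -/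
open scoped BigOperators

/-- characterization of the solutions of `Δeq.opp. = 0`. -/
theorem stmt_14 {K : ℕ} (pD : ℝ) (hpD : pD ∈ Set.Ioo (0:ℝ) 1)
    (pp pm : Fin K → ℝ) (hpp : ∀ y, 0 < pp y) (hpm : ∀ y, 0 < pm y)
    (hsum : ∑ y, (pp y + pm y) = 1)
    (Cp Cm : Fin K → ℝ)
    (hCp : ∀ y, Cp y ∈ Set.Ico (0:ℝ) 1) (hCm : ∀ y, Cm y ∈ Set.Ico (0:ℝ) 1)
    (α : Fin K → ℝ) (hα : α = fun y => pp y / (1 - Cp y) + pm y / (1 - Cm y))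
    (q qp : Fin K → ℝ) :
    ((∑ y, q y = 1) ∧ (∀ y, 0 ≤ qp y ∧ qp y ≤ q y) ∧
      (∀ y, Cp y * (1 - pD * (qp y / pp y)) - Cm y * (1 - pD * ((q y - qp y) / pm y))
          + pD * (qp y / pp y - (q y - qp y) / pm y) = 0))
    ↔ ∃ l : Fin K → ℝ,
        (∀ y, q y = (pp y + pm y) / pD - α y * l y) ∧
        (∀ y, qp y = pp y / pD - (pp y / (1 - Cp y)) * l y) ∧
        (∑ y, α y * l y = (1 - pD) / pD) ∧
        (∀ y, l y ≤ (1 - Cp y) / pD ∧ l y ≤ (1 - Cm y) / pD) := by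
  obtain ⟨hpD0, hpD1⟩ := hpD
  have hpDne : pD ≠ 0 := ne_of_gt hpD0
  have hCp1 : ∀ y, 0 < 1 - Cp y := fun y => by have := (hCp y).2; linarith
  have hCm1 : ∀ y, 0 < 1 - Cm y := fun y => by have := (hCm y).2; linarith
  have hCp1' : ∀ y, (1 - Cp y) ≠ 0 := fun y => ne_of_gt (hCp1 y)
  have hCm1' : ∀ y, (1 - Cm y) ≠ 0 := fun y => ne_of_gt (hCm1 y)
  have hppne : ∀ y, pp y ≠ 0 := fun y => ne_of_gt (hpp y)
  have hpmne : ∀ y, pm y ≠ 0 := fun y => ne_of_gt (hpm y)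
  have hαy : ∀ y, α y = pp y / (1 - Cp y) + pm y / (1 - Cm y) := fun y => by rw [hα]
  constructor
  · rintro ⟨hq1, hineq, hc⟩
    set l : Fin K → ℝ := fun y => (1 - Cp y) * (1 - pD * (qp y / pp y)) / pD with hl
    -- key rewriting of the constraint
    have hE : ∀ y, (1 - Cp y) * (1 - pD * (qp y / pp y))
        = (1 - Cm y) * (1 - pD * ((q y - qp y) / pm y)) := fun y => by
      linear_combination -(hc y)
    have hqpf : ∀ y, qp y = pp y / pD - (pp y / (1 - Cp y)) * l y := fun y => by
      have h1 := hppne y; have h3 := hCp1' y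
      simp only [hl]
      field_simp
      ring
    have hqmf : ∀ y, q y - qp y = pm y / pD - (pm y / (1 - Cm y)) * l y := fun y => by
      have hl2 : l y = (1 - Cm y) * (1 - pD * ((q y - qp y) / pm y)) / pD := by
        simp only [hl]; rw [hE y]
      have h2 := hpmne y; have h4 := hCm1' y
      rw [hl2]
      field_simp
      ring
    have hqf : ∀ y, q y = (pp y + pm y) / pD - α y * l y := fun y => by
      rw [hαy y]
      linear_combination hqpf y + hqmf y
    refine ⟨l, hqf, hqpf, ?_, ?_⟩
    · have hs : ∑ y, α y * l y = ∑ y, ((pp y + pm y) / pD - q y) :=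
        Finset.sum_congr rfl fun y _ => by linarith [hqf y]
      rw [hs, Finset.sum_sub_distrib, ← Finset.sum_div, hsum, hq1]
      field_simp
    · intro y
      constructor
      · have h0 := (hineq y).1
        rw [hqpf y] at h0
        have hkey : pp y / (1 - Cp y) * l y ≤ pp y / (1 - Cp y) * ((1 - Cp y) / pD) := by
          have he : pp y / (1 - Cp y) * ((1 - Cp y) / pD) = pp y / pD := by
            have h3 := hCp1' y; field_simp
          rw [he]; linarith
        exact le_of_mul_le_mul_left hkey (div_pos (hpp y) (hCp1 y))
      · have h0 : 0 ≤ q y - qp y := by linarith [(hineq y).2]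
        rw [hqmf y] at h0
        have hkey : pm y / (1 - Cm y) * l y ≤ pm y / (1 - Cm y) * ((1 - Cm y) / pD) := by
          have he : pm y / (1 - Cm y) * ((1 - Cm y) / pD) = pm y / pD := by
            have h4 := hCm1' y; field_simp
          rw [he]; linarith
        exact le_of_mul_le_mul_left hkey (div_pos (hpm y) (hCm1 y))
  · rintro ⟨l, hqf, hqpf, hsl, hle⟩
    have hqmf : ∀ y, q y - qp y = pm y / pD - (pm y / (1 - Cm y)) * l y := fun y => by
      rw [hqf y, hqpf y, hαy y]; ring
    refine ⟨?_, ?_, ?_⟩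
    · have hs : ∑ y, q y = ∑ y, ((pp y + pm y) / pD - α y * l y) :=
        Finset.sum_congr rfl fun y _ => hqf y
      rw [hs, Finset.sum_sub_distrib, ← Finset.sum_div, hsum, hsl]
      field_simp; ring
    · intro y
      have h1 : pp y / (1 - Cp y) * l y ≤ pp y / pD := by
        have := mul_le_mul_of_nonneg_left (hle y).1 (le_of_lt (div_pos (hpp y) (hCp1 y)))
        have he : pp y / (1 - Cp y) * ((1 - Cp y) / pD) = pp y / pD := by
          have h3 := hCp1' y; field_simp
        linarith [he ▸ this]
      have h2 : pm y / (1 - Cm y) * l y ≤ pm y / pD := by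
        have := mul_le_mul_of_nonneg_left (hle y).2 (le_of_lt (div_pos (hpm y) (hCm1 y)))
        have he : pm y / (1 - Cm y) * ((1 - Cm y) / pD) = pm y / pD := by
          have h4 := hCm1' y; field_simp
        linarith [he ▸ this]
      constructor
      · rw [hqpf y]; linarith
      · have := hqmf y; linarith
    · intro y
      have h1 : qp y / pp y = 1 / pD - l y / (1 - Cp y) := by
        have h1 := hppne y; have h3 := hCp1' y
        rw [hqpf y]; field_simp
      have h2 : (q y - qp y) / pm y = 1 / pD - l y / (1 - Cm y) := by
        have h2 := hpmne y; have h4 := hCm1' y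
        rw [hqmf y]; field_simp
      have h3 := hCp1' y; have h4 := hCm1' y
      rw [h1, h2]
      field_simp
      ring
end

section
/- (Necessary condition for Δeq.opp. = 0 solvability.) With p_y⁺, p_y⁻ > 0, Σ_y(p_y⁺+p_y⁻)=1, C_y⁺, C_y⁻ ∈ [0,1), α_y = p_y⁺/(1−C_y⁺) + p_y⁻/(1−C_y⁻), p⁺ = Σ_y p_y⁺, p⁻ = Σ_y p_y⁻: if there exist λ_y with λ_y ≤ (1−C_y⁺)/p_D, λ_y ≤ (1−C_y⁻)/p_D, and Σ_y α_yλ_y = (1−p_D)/p_D, then p_D ≥ p⁻·min_y (C_y⁺ − C_y⁻)/(1−C_y⁻) and p_D ≥ p⁺·min_y (C_y⁻ − C_y⁺)/(1−C_y⁺). -/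
/-!
Multiply the balance equation by `p_D`: `1 - p_D = ∑ y, α_y (p_D λ_y)`. Bounding `p_D λ_y` by
`1 - C_y⁺` turns each summand into at most `p_y⁺ + p_y⁻ (1 - C_y⁺) / (1 - C_y⁻)`
`= p_y⁺ + p_y⁻ - p_y⁻ (C_y⁺ - C_y⁻) / (1 - C_y⁻)`, so `1 - p_D ≤ 1 - ∑ y, p_y⁻ r_y` with
`r_y = (C_y⁺ - C_y⁻) / (1 - C_y⁻) ≥ min r`. The second bound is the first with `+` and `-` swapped.
-/

open Finset

lemma mul_weight_mul_le {pD a b cp cm l : ℝ} (hpD : 0 < pD) (ha : 0 ≤ a) (hb : 0 ≤ b)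
    (hcp : cp < 1) (hcm : cm < 1) (hl : l ≤ (1 - cp) / pD) :
    pD * ((a / (1 - cp) + b / (1 - cm)) * l) ≤ a + b - b * ((cp - cm) / (1 - cm)) := by
  have hcp' : 0 < 1 - cp := by linarith
  have hcm' : 0 < 1 - cm := by linarith
  have hpDl : pD * l ≤ 1 - cp := by rwa [le_div_iff₀ hpD, mul_comm] at hl
  calc pD * ((a / (1 - cp) + b / (1 - cm)) * l)
      = a / (1 - cp) * (pD * l) + b / (1 - cm) * (pD * l) := by ring
    _ ≤ a / (1 - cp) * (1 - cp) + b / (1 - cm) * (1 - cp) := by gcongr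
    _ = a + b - b * ((cp - cm) / (1 - cm)) := by field_simp; ring

lemma sum_mul_inf'_le_of_sum_weight_mul_eq {ι : Type*} [Fintype ι] [Nonempty ι]
    {pD : ℝ} (hpD : 0 < pD) {pp pm Cp Cm l : ι → ℝ}
    (hpp : ∀ y, 0 ≤ pp y) (hpm : ∀ y, 0 ≤ pm y) (hsum : ∑ y, (pp y + pm y) = 1)
    (hCp : ∀ y, Cp y < 1) (hCm : ∀ y, Cm y < 1) (hl : ∀ y, l y ≤ (1 - Cp y) / pD)
    (hleq : ∑ y, (pp y / (1 - Cp y) + pm y / (1 - Cm y)) * l y = (1 - pD) / pD) :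
    (∑ y, pm y) * univ.inf' univ_nonempty (fun y => (Cp y - Cm y) / (1 - Cm y)) ≤ pD := by
  set r := fun y => (Cp y - Cm y) / (1 - Cm y)
  have hbalance : 1 - pD = ∑ y, pD * ((pp y / (1 - Cp y) + pm y / (1 - Cm y)) * l y) := by
    rw [← mul_sum, hleq]
    field_simp
  have hupper : 1 - pD ≤ 1 - ∑ y, pm y * r y := by
    calc 1 - pD ≤ ∑ y, (pp y + pm y - pm y * r y) := hbalance ▸ sum_le_sum fun y _ =>
          mul_weight_mul_le hpD (hpp y) (hpm y) (hCp y) (hCm y) (hl y)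
      _ = 1 - ∑ y, pm y * r y := by rw [sum_sub_distrib, hsum]
  have hinf : (∑ y, pm y) * univ.inf' univ_nonempty r ≤ ∑ y, pm y * r y := by
    rw [sum_mul]
    exact sum_le_sum fun y _ => mul_le_mul_of_nonneg_left (inf'_le r (mem_univ y)) (hpm y)
  linarith

/-- necessary condition for solvability of `Δeq.opp. = 0`. -/
theorem stmt_16 {K : ℕ} [NeZero K] (pD : ℝ) (hpD : pD ∈ Set.Ioo (0:ℝ) 1)
    (pp pm : Fin K → ℝ) (hpp : ∀ y, 0 < pp y) (hpm : ∀ y, 0 < pm y)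
    (hsum : ∑ y, (pp y + pm y) = 1)
    (Cp Cm : Fin K → ℝ)
    (hCp : ∀ y, Cp y ∈ Set.Ico (0:ℝ) 1) (hCm : ∀ y, Cm y ∈ Set.Ico (0:ℝ) 1)
    (α : Fin K → ℝ) (hα : α = fun y => pp y / (1 - Cp y) + pm y / (1 - Cm y))
    (l : Fin K → ℝ)
    (hl1 : ∀ y, l y ≤ (1 - Cp y) / pD) (hl2 : ∀ y, l y ≤ (1 - Cm y) / pD)
    (hleq : ∑ y, α y * l y = (1 - pD) / pD) :
    pD ≥ (∑ y, pm y)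
        * Finset.univ.inf' Finset.univ_nonempty (fun y => (Cp y - Cm y) / (1 - Cm y)) ∧
    pD ≥ (∑ y, pp y)
        * Finset.univ.inf' Finset.univ_nonempty (fun y => (Cm y - Cp y) / (1 - Cp y)) := by
  subst hα
  have hpp' y := (hpp y).le
  have hpm' y := (hpm y).le
  have hCp' y := (hCp y).2
  have hCm' y := (hCm y).2
  refine ⟨sum_mul_inf'_le_of_sum_weight_mul_eq hpD.1 hpp' hpm' hsum hCp' hCm' hl1 hleq,
    sum_mul_inf'_le_of_sum_weight_mul_eq hpD.1 hpm' hpp' ?_ hCm' hCp' hl2 ?_⟩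
  · simpa only [add_comm] using hsum
  · simpa only [add_comm] using hleq
end
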